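/- arXiv:2404.02714 — 2 statements merged into one kernel-verified Lean document; each statement's English description precedes it below -/
import Mathlib

section
/- Let n ≥ k ≥ 2 be positive integers. Then n ≥ R(k) holds if and only if for every real number q and every integer m, Σ_{U ⊆ C([n],k)} (-1)^{(m+1)|U|} ∏_{e ∈ C([n],2)} cos( (2π/(k(k-1))) ( q·C(n-2,k-2) + m·mult(e,U) ) ) = 0, where the sum is over all subsets U of the set of k-element subsets of [n] and the product is over all 2-element subsets e of [n]. -/
/-
Writing `2 cos x = e^{ix} + e^{-ix}` and expanding, `2^{C(n,2)}` times the sum becomes a sum over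
all graphs `T` on `[n]` of `e^{iθA σ(T)} ∏_S (1 + (-1)^{m+1} e^{iθ m w_T(S)})`, where `S` runs
over the `k`-sets, `w_T(S)` is the number of edges minus the number of non-edges of `T` inside `S`,
`σ(T) = w_T([n])`, `A = q C(n-2,k-2)` and `θ = 2π/(k(k-1))`, so that `θ C(k,2) = π`.
If `n ≥ R(k)`, each `T` has a clique or independent `k`-set `S`; there `w_T(S) = ±C(k,2)` and the
factor of `S` vanishes. Otherwise take `m = 1`, `q = -1/2`: since `∑_S w_T(S) = C(n-2,k-2) σ(T)`,
the phases cancel and the term of `T` is `∏_S 2 cos(θ w_T(S)/2) ≥ 0`, which is strictly positive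
for a graph `T` with neither cliques nor independent sets of size `k`.
-/

open Finset

/-- The k-th diagonal Ramsey number. -/
noncomputable def diagonalRamsey (k : ℕ) : ℕ :=
  sInf {n : ℕ | 0 < n ∧ ∀ G : SimpleGraph (Fin n),
    (∃ s : Finset (Fin n), G.IsNClique k s) ∨ (∃ s : Finset (Fin n), Gᶜ.IsNClique k s)}

open Complex
open scoped Real

theorem SimpleGraph.exists_ramsey_bound (a b : ℕ) :
    ∃ N, ∀ {V : Type*} (G : SimpleGraph V) (s : Finset V), N ≤ #s →
      (∃ t ⊆ s, G.IsNClique a t) ∨ ∃ t ⊆ s, Gᶜ.IsNClique b t := by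
  induction a generalizing b with
  | zero => exact ⟨0, fun _ _ _ => .inl ⟨∅, empty_subset _, by simp⟩⟩
  | succ a iha =>
    induction b with
    | zero => exact ⟨0, fun _ _ _ => .inr ⟨∅, empty_subset _, by simp⟩⟩
    | succ b ihb =>
      obtain ⟨N₁, hN₁⟩ := iha (b + 1)
      obtain ⟨N₂, hN₂⟩ := ihb
      refine ⟨N₁ + N₂ + 1, fun G s hs => ?_⟩
      classical
      obtain ⟨v, hv⟩ : s.Nonempty := by rw [← card_pos]; omega
      have hsplit : #{w ∈ s.erase v | G.Adj v w} + #{w ∈ s.erase v | ¬G.Adj v w} = #(s.erase v) :=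
        card_filter_add_card_filter_not _
      have herase := card_erase_add_one hv
      have hA : {w ∈ s.erase v | G.Adj v w} ⊆ s := (filter_subset _ _).trans (erase_subset _ _)
      have hB : {w ∈ s.erase v | ¬G.Adj v w} ⊆ s := (filter_subset _ _).trans (erase_subset _ _)
      by_cases hN : N₁ ≤ #{w ∈ s.erase v | G.Adj v w}
      · rcases hN₁ G _ hN with ⟨t, hts, ht⟩ | ⟨t, hts, ht⟩
        · refine .inl ⟨insert v t, insert_subset hv (hts.trans hA), ht.insert ?_⟩
          exact fun w hw => (mem_filter.1 (hts hw)).2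
        · exact .inr ⟨t, hts.trans hA, ht⟩
      · rcases hN₂ G {w ∈ s.erase v | ¬G.Adj v w} (by omega) with ⟨t, hts, ht⟩ | ⟨t, hts, ht⟩
        · exact .inl ⟨t, hts.trans hB, ht⟩
        · refine .inr ⟨insert v t, insert_subset hv (hts.trans hB), ht.insert ?_⟩
          intro w hw
          obtain ⟨hw, hvw⟩ := mem_filter.1 (hts hw)
          exact ⟨(ne_of_mem_erase hw).symm, hvw⟩

def IsRamsey (k : ℕ) (V : Type*) : Prop :=
  ∀ G : SimpleGraph V, (∃ s, G.IsNClique k s) ∨ ∃ s, Gᶜ.IsNClique k s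

theorem IsRamsey.of_embedding {k : ℕ} {V W : Type*} (f : V ↪ W) (h : IsRamsey k V) :
    IsRamsey k W := by
  intro G
  have hcompl : (G.comap f)ᶜ.map f ≤ Gᶜ := by
    rw [SimpleGraph.map_le_iff_le_comap]
    exact fun x y hxy => ⟨f.injective.ne hxy.1, hxy.2⟩
  rcases h (G.comap f) with ⟨s, hs⟩ | ⟨s, hs⟩
  · exact .inl ⟨_, hs.map.mono (SimpleGraph.map_comap_le f G)⟩
  · exact .inr ⟨_, hs.map.mono hcompl⟩

theorem IsRamsey.nonempty {k : ℕ} {V : Type*} (hk : k ≠ 0) (h : IsRamsey k V) : Nonempty V := by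
  by_contra hV
  rw [not_nonempty_iff] at hV
  rcases h ⊥ with ⟨s, hs⟩ | ⟨s, hs⟩ <;>
    exact hk (by simpa [Subsingleton.elim s ∅] using hs.card_eq.symm)

theorem exists_isRamsey_fin (k : ℕ) : ∃ n, IsRamsey k (Fin n) := by
  obtain ⟨N, hN⟩ := SimpleGraph.exists_ramsey_bound k k
  refine ⟨N, fun G => ?_⟩
  rcases hN G univ (by simp) with ⟨t, -, ht⟩ | ⟨t, -, ht⟩
  exacts [.inl ⟨t, ht⟩, .inr ⟨t, ht⟩]

theorem diagonalRamsey_le_iff {k n : ℕ} (hk : k ≠ 0) :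
    diagonalRamsey k ≤ n ↔ IsRamsey k (Fin n) := by
  have hpos : ∀ {n}, IsRamsey k (Fin n) → 0 < n := fun h => Fin.pos_iff_nonempty.2 (h.nonempty hk)
  refine ⟨fun hle => ?_, fun h => Nat.sInf_le ⟨hpos h, h⟩⟩
  obtain ⟨N, hN⟩ := exists_isRamsey_fin k
  have hmem : 0 < diagonalRamsey k ∧ IsRamsey k (Fin (diagonalRamsey k)) :=
    Nat.sInf_mem (s := {n | 0 < n ∧ IsRamsey k (Fin n)}) ⟨N, hpos hN, hN⟩
  exact hmem.2.of_embedding (Fin.castLEEmb hle)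

section Signs

variable {α : Type*} [DecidableEq α]

def memSign (T : Finset α) (a : α) : ℤ := if a ∈ T then 1 else -1

theorem sum_memSign (P T : Finset α) : ∑ a ∈ P, memSign T a = 2 * #(P ∩ T) - #P := by
  have hsplit : #{a ∈ P | a ∈ T} + #{a ∈ P | a ∉ T} = #P := card_filter_add_card_filter_not _
  simp only [memSign, sum_ite, sum_const, nsmul_eq_mul, mul_one, mul_neg,
    filter_mem_eq_inter] at hsplit ⊢
  omega

theorem abs_sum_memSign_le (P T : Finset α) : |∑ a ∈ P, memSign T a| ≤ #P := by
  have := card_le_card (inter_subset_left : P ∩ T ⊆ P)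
  rw [sum_memSign, abs_le]
  omega

theorem sum_memSign_eq_card_iff {P T : Finset α} : ∑ a ∈ P, memSign T a = #P ↔ P ⊆ T := by
  rw [sum_memSign, ← inter_eq_left]
  refine ⟨fun h => eq_of_subset_of_card_le inter_subset_left (by omega), fun h => ?_⟩
  rw [h]
  ring

theorem sum_memSign_eq_neg_card_iff {P T : Finset α} :
    ∑ a ∈ P, memSign T a = -#P ↔ Disjoint P T := by
  rw [sum_memSign, disjoint_iff_inter_eq_empty, ← card_eq_zero]
  omega

theorem two_pow_card_mul_prod_cos (s : Finset α) (x : α → ℝ) :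
    (2 : ℂ) ^ #s * ↑(∏ a ∈ s, Real.cos (x a)) =
      ∑ T ∈ s.powerset, exp (↑(∑ a ∈ s, memSign T a * x a) * I) := by
  have h2cos : ∀ a ∈ s, 2 * (Real.cos (x a) : ℂ) = exp (x a * I) + exp (-x a * I) := by
    intro a _
    rw [ofReal_cos, two_mul, cos]
    ring
  rw [ofReal_prod, ← prod_const, ← prod_mul_distrib, prod_congr rfl h2cos, prod_add]
  refine sum_congr rfl fun T hT => ?_
  have hsign : ∀ a ∈ s, exp (↑(memSign T a * x a) * I) =
      if a ∈ T then exp (x a * I) else exp (-x a * I) := by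
    intro a _
    unfold memSign
    split_ifs <;> simp
  rw [ofReal_sum, sum_mul, exp_sum, prod_congr rfl hsign, prod_ite, filter_mem_eq_inter,
    inter_eq_right.2 (mem_powerset.1 hT), filter_notMem_eq_sdiff]

end Signs

section Analysis

theorem prod_one_add_exp {ι : Type*} (s : Finset ι) (x : ι → ℝ) :
    ∏ i ∈ s, (1 + exp (x i * I)) =
      exp (↑((∑ i ∈ s, x i) / 2) * I) * ↑(∏ i ∈ s, 2 * Real.cos (x i / 2)) := by
  have h : ∀ i ∈ s, 1 + exp (x i * I) = exp (↑(x i / 2) * I) * ↑(2 * Real.cos (x i / 2)) := by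
    intro i _
    push_cast
    rw [cos, mul_div_cancel₀ _ two_ne_zero, mul_add, ← exp_add, ← exp_add]
    ring_nf
    rw [exp_zero, add_comm]
  rw [prod_congr rfl h, prod_mul_distrib, ← exp_sum, ← ofReal_prod, sum_div, ofReal_sum, sum_mul]

theorem one_add_neg_one_zpow_mul_exp_eq_zero {x : ℝ} (hx : exp (x * I) = -1) (m : ℤ) :
    1 + (-1) ^ (m + 1) * exp (↑(m * x) * I) = 0 := by
  rw [ofReal_mul, ofReal_intCast, mul_assoc, exp_int_mul, hx, ← zpow_add₀ (by norm_num),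
    show m + 1 + m = 2 * m + 1 by ring, zpow_add₀ (by norm_num), zpow_mul]
  norm_num

theorem cos_half_nonneg {θ J w : ℝ} (hJ : θ * J = π) (hw : |w| ≤ J) :
    0 ≤ Real.cos (θ * w / 2) := by
  have hθ : 0 < θ := pos_of_mul_pos_left (hJ ▸ Real.pi_pos) ((abs_nonneg w).trans hw)
  rw [abs_le] at hw
  apply Real.cos_nonneg_of_mem_Icc
  constructor <;> nlinarith

theorem cos_half_pos {θ J w : ℝ} (hJ : θ * J = π) (hw : |w| < J) : 0 < Real.cos (θ * w / 2) := by
  have hθ : 0 < θ := pos_of_mul_pos_left (hJ ▸ Real.pi_pos) ((abs_nonneg w).trans hw.le)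
  rw [abs_lt] at hw
  apply Real.cos_pos_of_mem_Ioo
  constructor <;> nlinarith

end Analysis

section CliqueSign

variable {V : Type*} [DecidableEq V]

theorem Finset.forall_mem_powersetCard_two {S : Finset V} {p : Finset V → Prop} :
    (∀ e ∈ S.powersetCard 2, p e) ↔ ∀ i ∈ S, ∀ j ∈ S, i ≠ j → p {i, j} := by
  refine ⟨fun h i hi j hj hij => h _ (mem_powersetCard.2 ⟨?_, card_pair hij⟩), fun h e he => ?_⟩
  · exact insert_subset hi (singleton_subset_iff.2 hj)
  · obtain ⟨heS, he⟩ := mem_powersetCard.1 he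
    obtain ⟨i, j, hij, rfl⟩ := card_eq_two.1 he
    exact h i (heS (by simp)) j (heS (by simp)) hij

def pairGraph (T : Finset (Finset V)) : SimpleGraph V :=
  SimpleGraph.fromRel fun i j => {i, j} ∈ T

theorem pairGraph_adj {T : Finset (Finset V)} {i j : V} :
    (pairGraph T).Adj i j ↔ i ≠ j ∧ {i, j} ∈ T := by
  simp [pairGraph, pair_comm]

theorem isClique_pairGraph_iff {T : Finset (Finset V)} {S : Finset V} :
    (pairGraph T).IsClique (S : Set V) ↔ S.powersetCard 2 ⊆ T := by
  rw [subset_iff, forall_mem_powersetCard_two (p := (· ∈ T))]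
  simp +contextual [SimpleGraph.isClique_iff, Set.Pairwise, pairGraph_adj]

theorem isClique_compl_pairGraph_iff {T : Finset (Finset V)} {S : Finset V} :
    (pairGraph T)ᶜ.IsClique (S : Set V) ↔ Disjoint (S.powersetCard 2) T := by
  rw [disjoint_left, forall_mem_powersetCard_two (p := (· ∉ T))]
  simp +contextual [SimpleGraph.isClique_iff, Set.Pairwise, pairGraph_adj]

/-- Edges minus non-edges inside `S` of the graph with edge set `T`. -/
def cliqueSign (T : Finset (Finset V)) (S : Finset V) : ℤ := ∑ e ∈ S.powersetCard 2, memSign T e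

theorem abs_cliqueSign_le (T : Finset (Finset V)) (S : Finset V) :
    |cliqueSign T S| ≤ (#S).choose 2 := by
  simpa [cliqueSign] using abs_sum_memSign_le (S.powersetCard 2) T

theorem cliqueSign_eq_iff_isClique {T : Finset (Finset V)} {S : Finset V} :
    cliqueSign T S = (#S).choose 2 ↔ (pairGraph T).IsClique (S : Set V) := by
  rw [isClique_pairGraph_iff, ← sum_memSign_eq_card_iff, cliqueSign, card_powersetCard]

theorem cliqueSign_eq_neg_iff_isClique_compl {T : Finset (Finset V)} {S : Finset V} :
    cliqueSign T S = -(#S).choose 2 ↔ (pairGraph T)ᶜ.IsClique (S : Set V) := by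
  rw [isClique_compl_pairGraph_iff, ← sum_memSign_eq_neg_card_iff, cliqueSign, card_powersetCard]

variable [Fintype V]

def edgePairs (G : SimpleGraph V) [DecidableRel G.Adj] : Finset (Finset V) :=
  {e ∈ powersetCard 2 univ | ∀ i ∈ e, ∀ j ∈ e, i ≠ j → G.Adj i j}

theorem pairGraph_edgePairs (G : SimpleGraph V) [DecidableRel G.Adj] :
    pairGraph (edgePairs G) = G := by
  ext i j
  simp only [pairGraph_adj, edgePairs, mem_filter, mem_powersetCard_univ]
  refine ⟨fun ⟨hij, _, h⟩ => h i (by simp) j (by simp) hij, fun h => ?_⟩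
  refine ⟨h.ne, card_pair h.ne, ?_⟩
  simp [h, h.symm]

theorem abs_cliqueSign_edgePairs_lt {G : SimpleGraph V} [DecidableRel G.Adj] {k : ℕ}
    {S : Finset V} (hS : #S = k) (hG : ¬G.IsNClique k S) (hGc : ¬Gᶜ.IsNClique k S) :
    |cliqueSign (edgePairs G) S| < k.choose 2 := by
  have hw := abs_cliqueSign_le (edgePairs G) S
  have hne : cliqueSign (edgePairs G) S ≠ k.choose 2 := fun heq =>
    hG ⟨pairGraph_edgePairs G ▸ cliqueSign_eq_iff_isClique.1 (hS ▸ heq), hS⟩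
  have hne' : cliqueSign (edgePairs G) S ≠ -k.choose 2 := fun heq =>
    hGc ⟨pairGraph_edgePairs G ▸ cliqueSign_eq_neg_iff_isClique_compl.1 (hS ▸ heq), hS⟩
  rw [hS, abs_le] at hw
  exact abs_lt.2 ⟨by omega, by omega⟩

theorem sum_nsmul_card_supersets_eq {M : Type*} [AddCommMonoid M] (r : ℕ)
    (U : Finset (Finset V)) (f : Finset V → M) :
    ∑ e ∈ powersetCard r univ, #{S ∈ U | e ⊆ S} • f e = ∑ S ∈ U, ∑ e ∈ S.powersetCard r, f e := by
  simp_rw [← sum_const]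
  exact sum_comm' fun e S => by simp [mem_powersetCard]; tauto

theorem sum_cliqueSign_powersetCard {k : ℕ} (hk : 2 ≤ k) (T : Finset (Finset V)) :
    ∑ S ∈ powersetCard k univ, cliqueSign T S =
      (Fintype.card V - 2).choose (k - 2) * cliqueSign T univ := by
  simp only [cliqueSign]
  rw [← sum_nsmul_card_supersets_eq, mul_sum]
  refine sum_congr rfl fun e he => ?_
  have he : #e = 2 := mem_powersetCard_univ.1 he
  rw [card_filter_powersetCard_subset e univ k (subset_univ e) (he ▸ hk), he, card_univ,
    nsmul_eq_mul]

theorem sum_memSign_mul_eq (T U : Finset (Finset V)) (θ A : ℝ) (m : ℤ) :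
    ∑ e ∈ powersetCard 2 univ, memSign T e * (θ * (A + m * #{S ∈ U | e ⊆ S})) =
      θ * A * cliqueSign T univ + ∑ S ∈ U, θ * m * cliqueSign T S := by
  have h := sum_nsmul_card_supersets_eq 2 U (fun e => (memSign T e : ℝ))
  simp only [nsmul_eq_mul] at h
  push_cast [cliqueSign]
  rw [← mul_sum, ← h, mul_sum, mul_sum, ← sum_add_distrib]
  exact sum_congr rfl fun e _ => by ring

end CliqueSign

/-- The sum of the statement, with `θ = 2π/(k(k-1))` and `A = q C(n-2,k-2)` left free. -/
noncomputable def cosSum (V : Type*) [Fintype V] [DecidableEq V] (k : ℕ) (θ A : ℝ) (m : ℤ) : ℝ :=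
  ∑ U ∈ (powersetCard k (univ : Finset V)).powerset, (-1 : ℝ) ^ ((m + 1) * (#U : ℤ)) *
    ∏ e ∈ powersetCard 2 (univ : Finset V), Real.cos (θ * (A + m * #{S ∈ U | e ⊆ S}))

section CosSum

variable {V : Type*} [Fintype V] [DecidableEq V]

theorem two_pow_mul_cosSum (k : ℕ) (θ A : ℝ) (m : ℤ) :
    (2 : ℂ) ^ #(powersetCard 2 (univ : Finset V)) * cosSum V k θ A m =
      ∑ T ∈ (powersetCard 2 (univ : Finset V)).powerset, exp (↑(θ * A * cliqueSign T univ) * I) *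
        ∏ S ∈ powersetCard k univ, (1 + (-1) ^ (m + 1) * exp (↑(θ * m * cliqueSign T S) * I)) := by
  simp_rw [prod_one_add, mul_sum]
  rw [cosSum, ofReal_sum, mul_sum, sum_comm]
  refine sum_congr rfl fun U _ => ?_
  rw [ofReal_mul, mul_left_comm, two_pow_card_mul_prod_cos, mul_sum]
  refine sum_congr rfl fun T _ => ?_
  rw [sum_memSign_mul_eq, ofReal_add, add_mul _ _ I, exp_add, ofReal_sum, sum_mul, exp_sum,
    prod_mul_distrib, prod_const, ← zpow_natCast, ← zpow_mul, ofReal_zpow]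
  push_cast
  ring

theorem cosSum_eq_zero_of_isRamsey {k : ℕ} (h : IsRamsey k V) {θ : ℝ}
    (hθ : θ * k.choose 2 = π) (A : ℝ) (m : ℤ) : cosSum V k θ A m = 0 := by
  suffices (2 : ℂ) ^ #(powersetCard 2 (univ : Finset V)) * cosSum V k θ A m = 0 by
    simpa using this
  rw [two_pow_mul_cosSum]
  refine sum_eq_zero fun T _ => mul_eq_zero_of_right _ ?_
  -- a monochromatic `k`-set `S` has `θ * cliqueSign T S = ± π`, killing its factor
  obtain ⟨S, hS, hπ⟩ : ∃ S ∈ powersetCard k univ, exp (↑(θ * cliqueSign T S) * I) = -1 := by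
    rcases h (pairGraph T) with ⟨S, hS⟩ | ⟨S, hS⟩
    · refine ⟨S, mem_powersetCard_univ.2 hS.card_eq, ?_⟩
      rw [cliqueSign_eq_iff_isClique.2 hS.isClique, hS.card_eq, Int.cast_natCast, hθ,
        exp_pi_mul_I]
    · refine ⟨S, mem_powersetCard_univ.2 hS.card_eq, ?_⟩
      rw [cliqueSign_eq_neg_iff_isClique_compl.2 hS.isClique, hS.card_eq, Int.cast_neg,
        Int.cast_natCast, mul_neg, hθ, ofReal_neg, neg_mul, exp_neg_pi_mul_I]
  refine prod_eq_zero hS ?_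
  rw [show θ * m * (cliqueSign T S : ℝ) = m * (θ * cliqueSign T S) by ring]
  exact one_add_neg_one_zpow_mul_exp_eq_zero hπ m

theorem two_pow_mul_cosSum_one {k : ℕ} (hk : 2 ≤ k) (θ : ℝ) :
    (2 : ℂ) ^ #(powersetCard 2 (univ : Finset V)) *
        cosSum V k θ (-(1 / 2) * (Fintype.card V - 2).choose (k - 2)) 1 =
      ↑(∑ T ∈ (powersetCard 2 (univ : Finset V)).powerset,
        ∏ S ∈ powersetCard k univ, 2 * Real.cos (θ * cliqueSign T S / 2)) := by
  set C := (Fintype.card V - 2).choose (k - 2)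
  rw [two_pow_mul_cosSum, ofReal_sum]
  refine sum_congr rfl fun T _ => ?_
  have hsum : ∑ S ∈ powersetCard k univ, θ * (cliqueSign T S : ℝ) =
      θ * C * cliqueSign T univ := by
    rw [← mul_sum, ← Int.cast_sum, sum_cliqueSign_powersetCard hk T]
    push_cast
    ring
  simp only [Int.cast_one, mul_one, show (-1 : ℂ) ^ ((1 : ℤ) + 1) = 1 by norm_num, one_mul]
  rw [prod_one_add_exp _ (fun S => θ * (cliqueSign T S : ℝ)), hsum, ← mul_assoc, ← exp_add,
    ← add_mul, ← ofReal_add,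
    show θ * (-(1 / 2) * C) * cliqueSign T univ + θ * C * cliqueSign T univ / 2 = 0 by ring,
    ofReal_zero, zero_mul, exp_zero, one_mul]

theorem cosSum_ne_zero_of_not_isRamsey {k : ℕ} (hk : 2 ≤ k) (h : ¬IsRamsey k V) {θ : ℝ}
    (hθ : θ * k.choose 2 = π) :
    cosSum V k θ (-(1 / 2) * (Fintype.card V - 2).choose (k - 2)) 1 ≠ 0 := by
  classical
  obtain ⟨G, hG, hGc⟩ : ∃ G : SimpleGraph V,
      (∀ S, ¬G.IsNClique k S) ∧ ∀ S, ¬Gᶜ.IsNClique k S := by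
    simpa [IsRamsey, not_or] using h
  have hpos : 0 < ∑ T ∈ (powersetCard 2 (univ : Finset V)).powerset,
      ∏ S ∈ powersetCard k univ, 2 * Real.cos (θ * cliqueSign T S / 2) := by
    refine sum_pos' (fun T _ => prod_nonneg fun S hS => ?_)
      ⟨edgePairs G, mem_powerset.2 (filter_subset _ _), prod_pos fun S hS => ?_⟩
    · have hw := abs_cliqueSign_le T S
      rw [mem_powersetCard_univ.1 hS] at hw
      exact mul_nonneg two_pos.le (cos_half_nonneg hθ (by exact_mod_cast hw))
    · have hw := abs_cliqueSign_edgePairs_lt (mem_powersetCard_univ.1 hS) (hG S) (hGc S)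
      exact mul_pos two_pos (cos_half_pos hθ (by exact_mod_cast hw))
  intro h0
  have hreal := two_pow_mul_cosSum_one (V := V) hk θ
  rw [h0, ofReal_zero, mul_zero, eq_comm, ofReal_eq_zero] at hreal
  exact hpos.ne' hreal

end CosSum

theorem stmt_2_general (n k : ℕ) (hk : 2 ≤ k) :
    diagonalRamsey k ≤ n ↔
      ∀ (q : ℝ) (m : ℤ),
        (∑ U ∈ (Finset.powersetCard k (Finset.univ : Finset (Fin n))).powerset,
          (-1 : ℝ) ^ ((m + 1) * (U.card : ℤ)) *
            ∏ e ∈ Finset.powersetCard 2 (Finset.univ : Finset (Fin n)),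
              Real.cos (2 * Real.pi / ((k : ℝ) * ((k : ℝ) - 1)) *
                (q * ((n - 2).choose (k - 2) : ℝ) +
                  (m : ℝ) * ((U.filter fun S => e ⊆ S).card : ℝ)))) = 0 := by
  have hθ : 2 * π / (k * (k - 1)) * k.choose 2 = π := by
    have : (k : ℝ) - 1 ≠ 0 := by
      have : (2 : ℝ) ≤ k := by exact_mod_cast hk
      linarith
    rw [Nat.cast_choose_two]
    field_simp
  rw [diagonalRamsey_le_iff (by omega)]
  refine ⟨fun h q m => cosSum_eq_zero_of_isRamsey h hθ _ m, fun h => by_contra fun hR => ?_⟩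
  have hne := cosSum_ne_zero_of_not_isRamsey hk hR hθ
  rw [Fintype.card_fin] at hne
  exact hne (h (-(1 / 2)) 1)

theorem stmt_2 (n k : ℕ) (hk : 2 ≤ k) (hkn : k ≤ n) :
    diagonalRamsey k ≤ n ↔
      ∀ (q : ℝ) (m : ℤ),
        (∑ U ∈ (Finset.powersetCard k (Finset.univ : Finset (Fin n))).powerset,
          (-1 : ℝ) ^ ((m + 1) * (U.card : ℤ)) *
            ∏ e ∈ Finset.powersetCard 2 (Finset.univ : Finset (Fin n)),
              Real.cos (2 * Real.pi / ((k : ℝ) * ((k : ℝ) - 1)) *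
                (q * ((n - 2).choose (k - 2) : ℝ) +
                  (m : ℝ) * ((U.filter fun S => e ⊆ S).card : ℝ)))) = 0 :=
  stmt_2_general n k hk
end

section
/- Let n ≥ k ≥ 2 be positive integers. Then n ≥ R(k) holds if and only if for every real number q and every integer m, Σ_{G,H} (-1)^{|E(H)|} cos( (π q (n-2)!/(k!(n-k)!)) · (4|E(G)| − n(n−1)) + (4πm/(k(k−1))) · i(G,H) ) = 0, where the summation is over all simple graphs G on the vertex set [n] and all k-uniform hypergraphs H on the vertex set [n]. -/
/-!
Encode a graph by its edge set `W ⊆ C([n],2)`, let `e_W(v)` be the number of edges inside a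
`k`-set `v`, and put `β = 4πm/(k(k-1))`, so that `β · C(k,2) = 2πm`. Summing over the hypergraphs
first factors the inner sum as `Re (e^{iA_W} ∏_v (1 - e^{iβ e_W(v)}))`. If `R(k) ≤ n`, every graph
has a `k`-set `v` with `e_W(v) ∈ {0, C(k,2)}`, and the corresponding factor vanishes.

Conversely, take `m = 1` and a graph `W₀` without a homogeneous `k`-set. Complementation
`W ↦ C([n],2) \ W` conjugates the terms, so the whole sum is real; as its real part vanishes for
all `q`, it vanishes identically. It is a trigonometric polynomial in `q` whose coefficient of
index `j` is `∑_{|W| = j} ∏_v (1 - e^{iβ e_W(v)})`. Since `∑_v e_W(v) = |W| · C(n-2,k-2)`, each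
of these products is one common nonzero factor times `∏_v sin (β e_W(v) / 2)`, which is
nonnegative, and positive for `W₀`. So the coefficient of index `|W₀|` does not vanish.
-/

open Finset

namespace SimpleGraph

variable {V W : Type*}

theorem exists_isNClique_or_isNClique_compl_of_choose_le [DecidableEq V] (G : SimpleGraph V)
    (s t : ℕ) (S : Finset V) (hS : (s + t).choose s ≤ #S) :
    (∃ A ⊆ S, G.IsNClique s A) ∨ ∃ A ⊆ S, Gᶜ.IsNClique t A := by
  induction s generalizing t S with
  | zero => exact Or.inl ⟨∅, empty_subset _, by simp⟩
  | succ s ihs =>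
    induction t generalizing S with
    | zero => exact Or.inr ⟨∅, empty_subset _, by simp⟩
    | succ t iht =>
      classical
      obtain ⟨v, hv⟩ : S.Nonempty := card_pos.1 ((Nat.choose_pos (by omega)).trans_le hS)
      set N := {w ∈ S.erase v | G.Adj v w}
      set N' := {w ∈ S.erase v | ¬G.Adj v w}
      have hN : N ⊆ S := (filter_subset _ _).trans (erase_subset _ _)
      have hN' : N' ⊆ S := (filter_subset _ _).trans (erase_subset _ _)
      -- Pascal's rule splits the bound between the neighbours and the non-neighbours of `v`.
      have hsplit : #N + #N' + 1 = #S := by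
        rw [card_filter_add_card_filter_not, card_erase_add_one hv]
      have hpascal : (s + 1 + (t + 1)).choose (s + 1) =
          (s + t + 1).choose s + (s + t + 1).choose (s + 1) := by
        rw [show s + 1 + (t + 1) = s + t + 1 + 1 by omega, Nat.choose_succ_succ]
      obtain hbig | hbig : (s + (t + 1)).choose s ≤ #N ∨ (s + 1 + t).choose (s + 1) ≤ #N' := by
        rw [show s + (t + 1) = s + t + 1 by omega, show s + 1 + t = s + t + 1 by omega]
        omega
      · obtain ⟨A, hAN, hA⟩ | ⟨A, hAN, hA⟩ := ihs (t + 1) N hbig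
        · refine Or.inl ⟨insert v A, insert_subset hv (hAN.trans hN), ?_⟩
          exact hA.insert fun b hb => (mem_filter.1 (hAN hb)).2
        · exact Or.inr ⟨A, hAN.trans hN, hA⟩
      · obtain ⟨A, hAN, hA⟩ | ⟨A, hAN, hA⟩ := iht N' hbig
        · exact Or.inl ⟨A, hAN.trans hN', hA⟩
        · refine Or.inr ⟨insert v A, insert_subset hv (hAN.trans hN'), ?_⟩
          refine hA.insert fun b hb => ?_
          obtain ⟨hbv, hnadj⟩ := mem_filter.1 (hAN hb)
          exact (compl_adj G v b).2 ⟨(ne_of_mem_erase hbv).symm, hnadj⟩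

theorem IsNClique.of_comap {G : SimpleGraph W} (f : V ↪ W) {k : ℕ} {s : Finset V}
    (h : (G.comap f).IsNClique k s) : G.IsNClique k (s.map f) :=
  h.map.mono (map_comap_le f G)

theorem compl_comap (f : V ↪ W) (G : SimpleGraph W) : (G.comap f)ᶜ = Gᶜ.comap f := by
  ext
  simp [f.injective.ne_iff]

end SimpleGraph

open SimpleGraph in
theorem diagonalRamsey_le_iff_s3 {k n : ℕ} (hn : 0 < n) :
    diagonalRamsey k ≤ n ↔ ∀ G : SimpleGraph (Fin n),
      (∃ s : Finset (Fin n), G.IsNClique k s) ∨ ∃ s : Finset (Fin n), Gᶜ.IsNClique k s := by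
  refine ⟨fun hle G => ?_, fun h => Nat.sInf_le ⟨hn, h⟩⟩
  have hmem : (k + k).choose k ∈ {n : ℕ | 0 < n ∧ ∀ G : SimpleGraph (Fin n),
      (∃ s : Finset (Fin n), G.IsNClique k s) ∨ ∃ s : Finset (Fin n), Gᶜ.IsNClique k s} := by
    refine ⟨Nat.choose_pos (by omega), fun G => ?_⟩
    obtain ⟨A, -, hA⟩ | ⟨A, -, hA⟩ :=
      G.exists_isNClique_or_isNClique_compl_of_choose_le k k univ (by simp)
    exacts [Or.inl ⟨A, hA⟩, Or.inr ⟨A, hA⟩]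
  obtain ⟨-, hR⟩ : diagonalRamsey k ∈ _ := Nat.sInf_mem ⟨_, hmem⟩
  obtain ⟨s, hs⟩ | ⟨s, hs⟩ := hR (G.comap (Fin.castLEEmb hle))
  · exact Or.inl ⟨_, hs.of_comap⟩
  · rw [compl_comap] at hs
    exact Or.inr ⟨_, hs.of_comap⟩

section InducedEdges

variable {α : Type*} [DecidableEq α]

def inducedEdges (W : Finset (Finset α)) (v : Finset α) : ℕ := #{u ∈ W | u ⊆ v}

def graphOf (W : Finset (Finset α)) : SimpleGraph α := SimpleGraph.fromRel fun x y => {x, y} ∈ W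

theorem graphOf_adj {W : Finset (Finset α)} {x y : α} :
    (graphOf W).Adj x y ↔ x ≠ y ∧ {x, y} ∈ W := by
  simp [graphOf, pair_comm]

theorem card_filter_subset_product (W U : Finset (Finset α)) :
    #{p ∈ W ×ˢ U | p.1 ⊆ p.2} = ∑ v ∈ U, inducedEdges W v := by
  simp only [inducedEdges, card_filter, sum_product]
  exact sum_comm

theorem card_filter_powersetCard_superset {s u : Finset α} {k : ℕ} (hus : u ⊆ s)
    (huk : #u ≤ k) : #{v ∈ powersetCard k s | u ⊆ v} = (#s - #u).choose (k - #u) := by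
  rw [filter_powersetCard_subset u s k hus huk, card_image_of_injOn, card_powersetCard,
    card_sdiff_of_subset hus]
  intro v hv w hw hvw
  have hv : Disjoint v u := disjoint_of_subset_left (mem_powersetCard.1 hv).1 sdiff_disjoint
  have hw : Disjoint w u := disjoint_of_subset_left (mem_powersetCard.1 hw).1 sdiff_disjoint
  rw [← union_sdiff_cancel_right hv, ← union_sdiff_cancel_right hw]
  exact congrArg (· \ u) hvw

variable [Fintype α] {W : Finset (Finset α)}

theorem filter_subset_subset_powersetCard_two (hW : W ⊆ powersetCard 2 univ) (v : Finset α) :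
    {u ∈ W | u ⊆ v} ⊆ powersetCard 2 v := fun u hu => by
  obtain ⟨huW, huv⟩ := mem_filter.1 hu
  exact mem_powersetCard.2 ⟨huv, (mem_powersetCard.1 (hW huW)).2⟩

theorem inducedEdges_le (hW : W ⊆ powersetCard 2 univ) (v : Finset α) :
    inducedEdges W v ≤ (#v).choose 2 := by
  simpa [inducedEdges] using card_le_card (filter_subset_subset_powersetCard_two hW v)

theorem inducedEdges_eq_choose_two_iff (hW : W ⊆ powersetCard 2 univ) (v : Finset α) :
    inducedEdges W v = (#v).choose 2 ↔ (graphOf W).IsClique (v : Set α) := by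
  have hsub := filter_subset_subset_powersetCard_two hW v
  rw [inducedEdges, ← card_powersetCard]
  constructor
  · intro h x hx y hy hxy
    have hxy' : {x, y} ∈ powersetCard 2 v :=
      mem_powersetCard.2 ⟨insert_subset hx (singleton_subset_iff.2 hy), card_pair hxy⟩
    rw [← eq_of_subset_of_card_le hsub h.ge] at hxy'
    exact graphOf_adj.2 ⟨hxy, (mem_filter.1 hxy').1⟩
  · intro h
    refine le_antisymm (card_le_card hsub) (card_le_card fun u hu => ?_)
    obtain ⟨huv, hu2⟩ := mem_powersetCard.1 hu
    obtain ⟨x, y, hxy, rfl⟩ := card_eq_two.1 hu2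
    exact mem_filter.2 ⟨(graphOf_adj.1 (h (huv (by simp)) (huv (by simp)) hxy)).2, huv⟩

theorem inducedEdges_eq_zero_iff (hW : W ⊆ powersetCard 2 univ) (v : Finset α) :
    inducedEdges W v = 0 ↔ (graphOf W)ᶜ.IsClique (v : Set α) := by
  rw [inducedEdges, card_eq_zero, filter_eq_empty_iff]
  constructor
  · intro h x hx y hy hxy
    exact (SimpleGraph.compl_adj _ _ _).2 ⟨hxy, fun hadj => h (graphOf_adj.1 hadj).2
      (insert_subset hx (singleton_subset_iff.2 hy))⟩
  · intro h u huW huv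
    obtain ⟨x, y, hxy, rfl⟩ := card_eq_two.1 (mem_powersetCard.1 (hW huW)).2
    exact ((SimpleGraph.compl_adj _ _ _).1 (h (huv (mem_insert_self x {y}))
      (huv (by simp)) hxy)).2 (graphOf_adj.2 ⟨hxy, huW⟩)

theorem inducedEdges_add_inducedEdges_sdiff (hW : W ⊆ powersetCard 2 univ) (v : Finset α) :
    inducedEdges W v + inducedEdges (powersetCard 2 univ \ W) v = (#v).choose 2 := by
  rw [inducedEdges, inducedEdges, ← card_union_of_disjoint (disjoint_filter_filter disjoint_sdiff),
    ← filter_union, union_sdiff_of_subset hW, ← card_powersetCard]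
  congr 1
  ext u
  simp only [mem_filter, mem_powersetCard, subset_univ, true_and]
  exact and_comm

theorem sum_inducedEdges (hW : W ⊆ powersetCard 2 univ) {k : ℕ} (hk : 2 ≤ k) :
    ∑ v ∈ powersetCard k univ, inducedEdges W v = #W * (Fintype.card α - 2).choose (k - 2) := by
  simp only [inducedEdges, card_filter]
  rw [sum_comm, ← smul_eq_mul, ← sum_const]
  refine sum_congr rfl fun u hu => ?_
  have hu2 := (mem_powersetCard.1 (hW hu)).2
  rw [← card_filter, card_filter_powersetCard_superset (subset_univ u) (hu2 ▸ hk), hu2, card_univ]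

theorem exists_graphOf_eq (G : SimpleGraph α) : ∃ W ⊆ powersetCard 2 univ, graphOf W = G := by
  classical
  refine ⟨{u ∈ powersetCard 2 (univ : Finset α) | ∃ x ∈ u, ∃ y ∈ u, G.Adj x y},
    filter_subset _ _, ?_⟩
  ext x y
  simp only [graphOf_adj, mem_filter, mem_powersetCard, subset_univ, true_and, mem_insert,
    mem_singleton, exists_eq_or_imp, exists_eq_left, G.loopless.irrefl, false_or, or_false]
  exact ⟨fun ⟨_, _, h⟩ => h.elim id G.adj_symm, fun h => ⟨h.ne, card_pair h.ne, Or.inl h⟩⟩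

theorem inducedEdges_pos_and_lt {k : ℕ} (hW : W ⊆ powersetCard 2 univ)
    (hcl : ¬∃ s, (graphOf W).IsNClique k s) (hco : ¬∃ s, (graphOf W)ᶜ.IsNClique k s)
    {v : Finset α} (hv : v ∈ powersetCard k univ) :
    0 < inducedEdges W v ∧ inducedEdges W v < k.choose 2 := by
  obtain ⟨-, hvk⟩ := mem_powersetCard.1 hv
  subst hvk
  exact ⟨Nat.pos_of_ne_zero fun h => hco ⟨v, (inducedEdges_eq_zero_iff hW v).1 h, rfl⟩,
    (inducedEdges_le hW v).lt_of_ne fun h =>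
      hcl ⟨v, (inducedEdges_eq_choose_two_iff hW v).1 h, rfl⟩⟩

end InducedEdges

open Complex ComplexConjugate

theorem Complex.one_sub_exp_ofReal_mul_I (x : ℝ) :
    1 - exp (x * I) = -2 * I * Real.sin (x / 2) * exp (x / 2 * I) := by
  have hsq : exp (x * I) = exp (x / 2 * I) ^ 2 := by rw [← exp_nat_mul]; ring_nf
  have hinv : exp (-(x / 2) * I) * exp (x / 2 * I) = 1 := by rw [← exp_add]; ring_nf; exact exp_zero
  rw [ofReal_sin, sin, hsq]
  push_cast
  linear_combination (-1 : ℂ) * hinv +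
    (exp (-(x / 2) * I) * exp (x / 2 * I) - exp (x / 2 * I) ^ 2) * I_sq

theorem Complex.prod_one_sub_exp_ofReal_mul_I {ι : Type*} (s : Finset ι) (f : ι → ℝ) :
    ∏ i ∈ s, (1 - exp (f i * I)) = ∑ t ∈ s.powerset, (-1) ^ #t * exp ((∑ i ∈ t, f i : ℝ) * I) := by
  simp_rw [sub_eq_add_neg, prod_one_add, prod_neg, ofReal_sum, sum_mul, exp_sum]

theorem sum_powerset_neg_one_pow_mul_cos {ι : Type*} (s : Finset ι) (f : ι → ℝ) (A : ℝ) :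
    ∑ t ∈ s.powerset, (-1) ^ #t * Real.cos (A + ∑ i ∈ t, f i) =
      (Complex.exp (A * I) * ∏ i ∈ s, (1 - Complex.exp (f i * I))).re := by
  rw [prod_one_sub_exp_ofReal_mul_I, mul_sum, re_sum]
  refine sum_congr rfl fun t _ => ?_
  rw [mul_left_comm, ← exp_add, ← add_mul, ← ofReal_add,
    show (-1 : ℂ) ^ #t = ((-1 : ℝ) ^ #t : ℝ) by push_cast; rfl, re_ofReal_mul, exp_ofReal_mul_I_re]

theorem Polynomial.eq_zero_of_forall_eval_exp_mul_I (p : Polynomial ℂ)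
    (h : ∀ θ : ℝ, p.eval (exp (θ * I)) = 0) : p = 0 := by
  apply eq_zero_of_infinite_isRoot
  have hinj : Set.InjOn (fun θ : ℝ => exp (θ * I)) (Set.Ico 0 (2 * Real.pi)) :=
    fun x hx y hy hxy => Circle.exp_injOn_Ico (by simp) hx hy (Circle.ext (by simpa using hxy))
  refine ((Set.Ico_infinite Real.two_pi_pos).image hinj).mono ?_
  rintro _ ⟨θ, -, rfl⟩
  exact h θ

section IncidenceProduct

variable {α : Type*} [Fintype α] [DecidableEq α] {k : ℕ} {β : ℝ} {W : Finset (Finset α)}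

noncomputable def incidenceProduct (k : ℕ) (β : ℝ) (W : Finset (Finset α)) : ℂ :=
  ∏ v ∈ powersetCard k univ, (1 - exp ((β * inducedEdges W v : ℝ) * I))

theorem sum_powerset_neg_one_pow_mul_cos_incidence (k : ℕ) (A β : ℝ) (W : Finset (Finset α)) :
    ∑ U ∈ (powersetCard k (univ : Finset α)).powerset,
      (-1 : ℝ) ^ #U * Real.cos (A + β * (#{p ∈ W ×ˢ U | p.1 ⊆ p.2} : ℝ)) =
      (exp (A * I) * incidenceProduct k β W).re := by
  simp_rw [card_filter_subset_product, Nat.cast_sum, mul_sum]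
  exact sum_powerset_neg_one_pow_mul_cos _ _ A

theorem incidenceProduct_eq_zero (m : ℤ) (hβ : β * k.choose 2 = 2 * Real.pi * m)
    (hW : W ⊆ powersetCard 2 univ)
    (h : (∃ s, (graphOf W).IsNClique k s) ∨ ∃ s, (graphOf W)ᶜ.IsNClique k s) :
    incidenceProduct k β W = 0 := by
  obtain ⟨s, hs⟩ | ⟨s, hs⟩ := h
  · refine prod_eq_zero (mem_powersetCard.2 ⟨subset_univ s, hs.2⟩) ?_
    rw [(inducedEdges_eq_choose_two_iff hW s).2 hs.1, hs.2, hβ, sub_eq_zero, eq_comm,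
      show ((2 * Real.pi * m : ℝ) : ℂ) * I = m * (2 * Real.pi * I) by push_cast; ring]
    exact exp_int_mul_two_pi_mul_I m
  · refine prod_eq_zero (mem_powersetCard.2 ⟨subset_univ s, hs.2⟩) ?_
    simp [(inducedEdges_eq_zero_iff hW s).2 hs.1]

theorem conj_incidenceProduct (m : ℤ) (hβ : β * k.choose 2 = 2 * Real.pi * m)
    (hW : W ⊆ powersetCard 2 univ) :
    conj (incidenceProduct k β W) = incidenceProduct k β (powersetCard 2 univ \ W) := by
  rw [incidenceProduct, incidenceProduct, map_prod]
  refine prod_congr rfl fun v hv => ?_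
  have he : (inducedEdges (powersetCard 2 univ \ W) v : ℝ) = k.choose 2 - inducedEdges W v := by
    rw [eq_sub_iff_add_eq', ← (mem_powersetCard.1 hv).2]
    exact_mod_cast inducedEdges_add_inducedEdges_sdiff hW v
  rw [map_sub, map_one, ← exp_conj, map_mul, conj_ofReal, conj_I, he, mul_sub, hβ,
    show ((2 * Real.pi * m - β * inducedEdges W v : ℝ) : ℂ) * I =
      m * (2 * Real.pi * I) + (β * inducedEdges W v : ℝ) * -I by push_cast; ring,
    exp_add, exp_int_mul_two_pi_mul_I, one_mul]

theorem incidenceProduct_eq_mul_prod_sin (hk : 2 ≤ k) (hW : W ⊆ powersetCard 2 univ) :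
    incidenceProduct k β W = (-2 * I) ^ (Fintype.card α).choose k *
      exp ((β * (#W * (Fintype.card α - 2).choose (k - 2)) / 2 : ℝ) * I) *
      (∏ v ∈ powersetCard k univ, Real.sin (β * inducedEdges W v / 2) : ℝ) := by
  have hsum : ∑ v ∈ powersetCard k univ, ((β * inducedEdges W v : ℝ) : ℂ) / 2 * I =
      ((β * (#W * (Fintype.card α - 2).choose (k - 2)) / 2 : ℝ) : ℂ) * I := by
    rw [← sum_mul, ← sum_div, ← ofReal_sum, ← mul_sum, ← Nat.cast_sum, sum_inducedEdges hW hk]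
    push_cast
    ring
  simp_rw [incidenceProduct, one_sub_exp_ofReal_mul_I, prod_mul_distrib, prod_const,
    card_powersetCard, card_univ, ← exp_sum, hsum, ofReal_prod]
  ring

variable (α) in
noncomputable def incidenceSum (k : ℕ) (β t : ℝ) : ℂ :=
  ∑ W ∈ (powersetCard 2 (univ : Finset α)).powerset,
    exp ((t * (2 * #W - #(powersetCard 2 (univ : Finset α))) : ℝ) * I) * incidenceProduct k β W

theorem conj_incidenceSum (m : ℤ) (hβ : β * k.choose 2 = 2 * Real.pi * m) (t : ℝ) :
    conj (incidenceSum α k β t) = incidenceSum α k β t := by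
  rw [incidenceSum, map_sum]
  refine sum_nbij' (powersetCard 2 univ \ ·) (powersetCard 2 univ \ ·)
    (fun _ _ => mem_powerset.2 sdiff_subset) (fun _ _ => mem_powerset.2 sdiff_subset)
    (fun W hW => Finset.sdiff_sdiff_eq_self (mem_powerset.1 hW))
    (fun W hW => Finset.sdiff_sdiff_eq_self (mem_powerset.1 hW)) fun W hW => ?_
  have hW := mem_powerset.1 hW
  rw [map_mul, conj_incidenceProduct m hβ hW, ← exp_conj, map_mul, conj_ofReal, conj_I,
    card_sdiff_of_subset hW, Nat.cast_sub (card_le_card hW)]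
  congr 2
  push_cast
  ring

theorem sum_powersetCard_incidenceProduct_eq_zero (hβ : β * k.choose 2 = 2 * Real.pi)
    (h : ∀ t : ℝ, (incidenceSum α k β t).re = 0) (j : ℕ) :
    ∑ W ∈ powersetCard j (powersetCard 2 (univ : Finset α)), incidenceProduct k β W = 0 := by
  set E := powersetCard 2 (univ : Finset α)
  have hF (t : ℝ) : incidenceSum α k β t = 0 :=
    Complex.ext (h t) (conj_eq_iff_im.1 (conj_incidenceSum 1 (by simpa) t))
  set p : Polynomial ℂ :=
    ∑ W ∈ E.powerset, Polynomial.C (incidenceProduct k β W) * Polynomial.X ^ #W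
  have hp : p = 0 := by
    refine Polynomial.eq_zero_of_forall_eval_exp_mul_I p fun θ => ?_
    have hθ : exp (-(θ / 2 * #E : ℝ) * I) * p.eval (exp (θ * I)) = 0 := by
      rw [← hF (θ / 2), incidenceSum]
      simp only [p, Polynomial.eval_finsetSum, Polynomial.eval_mul, Polynomial.eval_C,
        Polynomial.eval_pow, Polynomial.eval_X, mul_sum, ← exp_nat_mul]
      refine sum_congr rfl fun W _ => ?_
      rw [mul_left_comm, ← exp_add, mul_comm]
      congr 2
      push_cast
      ring
    simpa using hθ
  simpa [p, Polynomial.finsetSum_coeff, Polynomial.coeff_C_mul_X_pow, sum_ite,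
    powersetCard_eq_filter, eq_comm] using congrArg (Polynomial.coeff · j) hp

theorem exists_re_incidenceSum_ne_zero (hk : 2 ≤ k) (hβ : β * k.choose 2 = 2 * Real.pi)
    {W₀ : Finset (Finset α)} (hW₀ : W₀ ⊆ powersetCard 2 univ)
    (hcl : ¬∃ s, (graphOf W₀).IsNClique k s) (hco : ¬∃ s, (graphOf W₀)ᶜ.IsNClique k s) :
    ∃ t : ℝ, (incidenceSum α k β t).re ≠ 0 := by
  by_contra! h
  have hsum := sum_powersetCard_incidenceProduct_eq_zero hβ h #W₀
  have hC : (0 : ℝ) < k.choose 2 := by exact_mod_cast Nat.choose_pos hk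
  have hβ0 : 0 < β := pos_of_mul_pos_left (hβ ▸ Real.two_pi_pos) hC.le
  -- After factoring out the common phase, the products of sines are `≥ 0`, and `> 0` at `W₀`.
  have hr_nonneg (W : Finset (Finset α)) (hW : W ⊆ powersetCard 2 univ) :
      0 ≤ ∏ v ∈ powersetCard k univ, Real.sin (β * inducedEdges W v / 2) :=
    prod_nonneg fun v hv => by
      have he : (inducedEdges W v : ℝ) ≤ k.choose 2 := by
        exact_mod_cast (mem_powersetCard.1 hv).2 ▸ inducedEdges_le hW v
      exact Real.sin_nonneg_of_nonneg_of_le_pi (by positivity) (by nlinarith)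
  have hr_pos : 0 < ∏ v ∈ powersetCard k univ, Real.sin (β * inducedEdges W₀ v / 2) :=
    prod_pos fun v hv => by
      obtain ⟨h0, hlt⟩ := inducedEdges_pos_and_lt hW₀ hcl hco hv
      have h0 : (0 : ℝ) < inducedEdges W₀ v := by exact_mod_cast h0
      have hlt : (inducedEdges W₀ v : ℝ) < k.choose 2 := by exact_mod_cast hlt
      exact Real.sin_pos_of_pos_of_lt_pi (by positivity) (by nlinarith)
  rw [sum_congr rfl fun W hW => by rw [incidenceProduct_eq_mul_prod_sin hk (mem_powersetCard.1 hW).1,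
    (mem_powersetCard.1 hW).2], ← mul_sum, ← ofReal_sum, mul_eq_zero, ofReal_eq_zero] at hsum
  refine (sum_pos' (fun W hW => hr_nonneg W (mem_powersetCard.1 hW).1)
    ⟨W₀, mem_powersetCard.2 ⟨hW₀, rfl⟩, hr_pos⟩).ne' (hsum.resolve_left ?_)
  exact mul_ne_zero (pow_ne_zero _ (by simp)) (exp_ne_zero _)

end IncidenceProduct

/-- A simple graph on `[n]` is identified with its edge set `W ⊆ C([n],2)`, and a
`k`-uniform hypergraph on `[n]` with its edge set `U ⊆ C([n],k)`.  The incidence number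
`i(G,H)` is the number of pairs `(u,v) ∈ E(G) × E(H)` with `u ⊆ v`. -/
theorem stmt_3 (n k : ℕ) (hk : 2 ≤ k) (hkn : k ≤ n) :
    diagonalRamsey k ≤ n ↔
      ∀ (q : ℝ) (m : ℤ),
        (∑ W ∈ (Finset.powersetCard 2 (Finset.univ : Finset (Fin n))).powerset,
          ∑ U ∈ (Finset.powersetCard k (Finset.univ : Finset (Fin n))).powerset,
            (-1 : ℝ) ^ U.card *
              Real.cos
                (Real.pi * q * ((n - 2).factorial : ℝ) /
                    ((k.factorial : ℝ) * ((n - k).factorial : ℝ)) *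
                  (4 * (W.card : ℝ) - (n : ℝ) * ((n : ℝ) - 1)) +
                4 * Real.pi * (m : ℝ) / ((k : ℝ) * ((k : ℝ) - 1)) *
                  (((W ×ˢ U).filter fun p => p.1 ⊆ p.2).card : ℝ))) = 0 := by
  have hk' : (2 : ℝ) ≤ k := by exact_mod_cast hk
  have hβ (m : ℤ) : 4 * Real.pi * m / (k * (k - 1)) * k.choose 2 = 2 * Real.pi * m := by
    have : (k : ℝ) - 1 ≠ 0 := by linarith
    rw [Nat.cast_choose_two]
    field_simp
    ring
  simp_rw [sum_powerset_neg_one_pow_mul_cos_incidence, diagonalRamsey_le_iff_s3 (by omega : 0 < n)]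
  constructor
  · intro h q m
    refine sum_eq_zero fun W hW => ?_
    rw [incidenceProduct_eq_zero m (hβ m) (mem_powerset.1 hW) (h (graphOf W)), mul_zero, zero_re]
  · intro h
    by_contra! hR
    obtain ⟨G, hcl, hco⟩ := hR
    obtain ⟨W₀, hW₀, rfl⟩ := exists_graphOf_eq G
    obtain ⟨t, ht⟩ := exists_re_incidenceSum_ne_zero hk (by rw [hβ 1, Int.cast_one, mul_one]) hW₀
      (not_exists.2 hcl) (not_exists.2 hco)
    have hE : (#(powersetCard 2 (univ : Finset (Fin n))) : ℝ) = n * (n - 1) / 2 := by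
      rw [card_powersetCard, card_univ, Fintype.card_fin, Nat.cast_choose_two]
    refine ht ?_
    rw [incidenceSum, re_sum]
    convert h (t * (k.factorial * (n - k).factorial) / (2 * Real.pi * (n - 2).factorial)) 1
      using 6 with W
    rw [hE]
    field_simp
    push_cast
    ring
end
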